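/- arXiv:math/0404091 — 3 statements merged into one kernel-verified Lean document; each statement's English description precedes it below -/
import Mathlib

section
/- Let (b_n)_{n≥1} be a sequence of positive reals with b_n comparable to 2^n·log n (i.e., there are constants 0 < c ≤ C with c·2^n·log n ≤ b_n ≤ C·2^n·log n for n ≥ 2). Let f(p) = (Σ_{n≥1} p^{-n}/b_n)^{-1}. Then ∫_{1/2}^1 (1+f(p))/f(p) dp = ∞, but limsup_{p↓1/2} f(p)/(p-1/2) = ∞. -/
open MeasureTheory Set Filter

lemma aux_not_summable :
    ¬ Summable (fun n : ℕ => (((n : ℝ) + 1) * Real.log ((n : ℝ) + 1))⁻¹) := by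
  have hlog2 : (0:ℝ) < Real.log 2 := Real.log_pos (by norm_num)
  set h : ℕ → ℝ := fun n => (((n : ℝ) + 1) * Real.log ((n : ℝ) + 2))⁻¹ with hh
  have hpos : ∀ n : ℕ, 0 < ((n : ℝ) + 1) * Real.log ((n : ℝ) + 2) := by
    intro n
    have h0 : (0:ℝ) ≤ (n:ℝ) := Nat.cast_nonneg n
    have : (0:ℝ) < Real.log ((n:ℝ)+2) := Real.log_pos (by linarith)
    positivity
  have hnonneg : ∀ n, 0 ≤ h n := fun n => le_of_lt (inv_pos.2 (hpos n))
  have hanti : ∀ ⦃m n : ℕ⦄, 0 < m → m ≤ n → h n ≤ h m := by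
    intro m n _ hmn
    apply inv_anti₀ (hpos m)
    have h1 : ((m:ℝ)) ≤ (n:ℝ) := Nat.cast_le.2 hmn
    have h0 : (0:ℝ) ≤ (m:ℝ) := Nat.cast_nonneg m
    have h2 : Real.log ((m:ℝ)+2) ≤ Real.log ((n:ℝ)+2) :=
      Real.log_le_log (by positivity) (by linarith)
    have h3 : 0 < Real.log ((m:ℝ)+2) := Real.log_pos (by linarith)
    nlinarith
  have hnotcond : ¬ Summable (fun k : ℕ => (2:ℝ) ^ k * h (2 ^ k)) := by
    intro hs
    have hcmp : Summable (fun k : ℕ => (2 * Real.log 2)⁻¹ * ((k:ℝ) + 2)⁻¹) := by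
      apply hs.of_nonneg_of_le (fun k => by positivity)
      intro k
      simp only [hh]
      push_cast
      set x : ℝ := (2:ℝ)^k with hx
      have hxpos : (0:ℝ) < x := by positivity
      have hx1 : (1:ℝ) ≤ x := one_le_pow₀ (by norm_num)
      have hlx : 0 < Real.log (x+2) := Real.log_pos (by linarith)
      have hlogle : Real.log (x + 2) ≤ ((k:ℝ)+2) * Real.log 2 := by
        calc Real.log (x + 2) ≤ Real.log (2 ^ (k+2)) :=
              Real.log_le_log (by linarith) (by rw [pow_add, hx]; norm_num; linarith)
          _ = ((k:ℝ)+2) * Real.log 2 := by rw [Real.log_pow]; push_cast; ring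
      rw [inv_eq_one_div, inv_eq_one_div, mul_one_div, ← div_eq_mul_inv, div_div,
        div_le_div_iff₀ (by positivity) (by positivity)]
      nlinarith
    have hsum2 : Summable (fun k : ℕ => ((k:ℝ) + 2)⁻¹) :=
      (summable_mul_left_iff (by positivity : (2 * Real.log 2)⁻¹ ≠ 0)).1 hcmp
    have : Summable (fun k : ℕ => ((k:ℕ):ℝ)⁻¹) := by
      rw [← summable_nat_add_iff 2]
      convert hsum2 using 2 with k
      · rfl
      push_cast; ring
    exact Real.not_summable_natCast_inv this
  have hnot : ¬ Summable h := fun hs =>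
    hnotcond ((summable_condensed_iff_of_nonneg hnonneg hanti).2 hs)
  intro hs
  apply hnot
  rw [← summable_nat_add_iff 1]
  have hs' : Summable (fun n : ℕ => (((n:ℝ) + 2) * Real.log ((n : ℝ) + 2))⁻¹) := by
    rw [← summable_nat_add_iff 1] at hs
    convert hs using 2 with n
    · rfl
    push_cast; ring_nf
  apply hs'.of_nonneg_of_le (fun n => hnonneg (n+1))
  intro n
  have h0 : (0:ℝ) ≤ (n:ℝ) := Nat.cast_nonneg n
  simp only [hh]
  push_cast
  apply inv_anti₀
  · have : (0:ℝ) < Real.log ((n:ℝ)+2) := Real.log_pos (by linarith)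
    positivity
  · have h2 : Real.log ((n:ℝ)+2) ≤ Real.log ((n:ℝ)+1+2) :=
      Real.log_le_log (by linarith) (by linarith)
    have h3 : 0 < Real.log ((n:ℝ)+2) := Real.log_pos (by linarith)
    nlinarith

set_option maxHeartbeats 1000000 in
/-- For level sizes `b_n ≍ 2^n log n` and `f(p) = (∑_{n≥1} p^{-n}/b_n)⁻¹`:
`∫_{1/2}^1 (1 + f(p))/f(p) dp = ∞` but `limsup_{p↓1/2} f(p)/(p - 1/2) = ∞`. -/
theorem stmt_11 (b : ℕ → ℝ) (hbpos : ∀ n, 1 ≤ n → 0 < b n)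
    (c C : ℝ) (hc : 0 < c) (hcC : c ≤ C)
    (hb : ∀ n : ℕ, 2 ≤ n →
      c * 2 ^ n * Real.log n ≤ b n ∧ b n ≤ C * 2 ^ n * Real.log n)
    (f : ℝ → ℝ)
    (hf : ∀ p ∈ Set.Ioo (1 / 2 : ℝ) 1,
      f p = (∑' n : ℕ, p ^ (-(n + 1 : ℤ)) / b (n + 1))⁻¹) :
    (∫⁻ p in Set.Ioo (1 / 2 : ℝ) 1, ENNReal.ofReal ((1 + f p) / f p)) = ⊤ ∧
    Filter.limsup (fun p => ENNReal.ofReal (f p / (p - 1 / 2)))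
      (nhdsWithin (1 / 2 : ℝ) (Set.Ioi (1 / 2))) = ⊤ := by
  have hC : 0 < C := lt_of_lt_of_le hc hcC
  have hlog2 : (0:ℝ) < Real.log 2 := Real.log_pos (by norm_num)
  have hb1 : 0 < b 1 := hbpos 1 le_rfl
  -- the summand, in `ℕ`-power form
  set a : ℕ → ℝ → ℝ := fun n p => (p ^ (n+1))⁻¹ / b (n+1) with ha
  have hterm : ∀ (p : ℝ) (n : ℕ), p ^ (-(n + 1 : ℤ)) / b (n + 1) = a n p := by
    intro p n
    have e : (-(n + 1 : ℤ)) = -(((n+1 : ℕ)):ℤ) := by push_cast; ring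
    have e2 : p ^ (-(n + 1 : ℤ)) = (p ^ (n+1))⁻¹ := by
      rw [e, zpow_neg, zpow_natCast]
    rw [ha, e2]
  set S : ℝ → ℝ := fun p => ∑' n : ℕ, a n p with hS
  have hfS : ∀ p ∈ Set.Ioo (1/2:ℝ) 1, f p = (S p)⁻¹ := by
    intro p hp
    rw [hf p hp]
    exact congrArg Inv.inv (tsum_congr (hterm p))
  -- lower bound for b in the form β * 2^(n+1) ≤ b (n+1)
  set β : ℝ := min (b 1 / 2) (c * Real.log 2) with hβ
  have hβpos : 0 < β := lt_min (by linarith) (by positivity)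
  have hblow : ∀ n : ℕ, β * 2 ^ (n+1) ≤ b (n+1) := by
    intro n
    rcases Nat.eq_zero_or_pos n with rfl | hn
    · calc β * 2 ^ 1 ≤ b 1 / 2 * 2 := by
            have := min_le_left (b 1 / 2) (c * Real.log 2); rw [hβ]; nlinarith
        _ = b 1 := by ring
    · have h2 : 2 ≤ n + 1 := by omega
      have hlow := (hb (n+1) h2).1
      have hlogn : Real.log 2 ≤ Real.log ((n:ℝ)+1) := by
        apply Real.log_le_log (by norm_num)
        have : (1:ℝ) ≤ (n:ℝ) := by exact_mod_cast hn
        linarith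
      have hcast : Real.log (((n+1 : ℕ)):ℝ) = Real.log ((n:ℝ)+1) := by push_cast; ring_nf
      rw [hcast] at hlow
      calc β * 2 ^ (n+1) ≤ (c * Real.log 2) * 2 ^ (n+1) := by
            have := min_le_right (b 1 / 2) (c * Real.log 2)
            have h2p : (0:ℝ) < 2 ^ (n+1) := by positivity
            rw [hβ]; nlinarith
        _ ≤ c * 2 ^ (n+1) * Real.log ((n:ℝ)+1) := by
            have h2p : (0:ℝ) < 2 ^ (n+1) := by positivity
            nlinarith [mul_le_mul_of_nonneg_left hlogn
              (by positivity : (0:ℝ) ≤ c * 2 ^ (n+1))]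
        _ ≤ b (n+1) := hlow
  -- key step estimate
  have hanonneg : ∀ p ∈ Set.Ioo (1/2:ℝ) 1, ∀ n : ℕ, 0 ≤ a n p := by
    intro p hp n
    have hp0 : 0 < p := by have := hp.1; linarith
    have := hbpos (n+1) (by omega)
    rw [ha]
    positivity
  have hstep : ∀ p ∈ Set.Ioo (1/2:ℝ) 1, ∀ (n : ℕ) (d : ℝ), 0 < d →
      d * 2 ^ (n+1) ≤ b (n+1) → a n p ≤ d⁻¹ * ((2*p)⁻¹) ^ (n+1) := by
    intro p hp n d hd hdb
    obtain ⟨hp1, hp2⟩ := hp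
    have hp0 : 0 < p := by linarith
    have hppow : 0 < p ^ (n+1) := by positivity
    have key : a n p ≤ (p ^ (n+1))⁻¹ / (d * 2 ^ (n+1)) := by
      rw [ha]
      exact div_le_div_of_nonneg_left (le_of_lt (inv_pos.2 hppow)) (by positivity) hdb
    refine key.trans_eq ?_
    rw [inv_pow, mul_pow, div_eq_mul_inv, mul_inv, mul_inv]
    ring
  have hfacts : ∀ p ∈ Set.Ioo (1/2:ℝ) 1,
      Summable (fun n => a n p) ∧ 0 < S p ∧ ∀ n : ℕ, a n p ≤ β⁻¹ * ((2*p)⁻¹) ^ n := by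
    intro p hp
    obtain ⟨hp1, hp2⟩ := hp
    have hp0 : 0 < p := by linarith
    have hr0 : (0:ℝ) ≤ (2*p)⁻¹ := by positivity
    have hr1 : (2*p)⁻¹ < 1 := inv_lt_one_of_one_lt₀ (by linarith)
    have hbd : ∀ n : ℕ, a n p ≤ β⁻¹ * ((2*p)⁻¹) ^ n := by
      intro n
      refine (hstep p ⟨hp1, hp2⟩ n β hβpos (hblow n)).trans ?_
      have h1 : ((2*p)⁻¹) ^ (n+1) ≤ ((2*p)⁻¹) ^ n :=
        pow_le_pow_of_le_one hr0 hr1.le (by omega)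
      exact mul_le_mul_of_nonneg_left h1 (le_of_lt (inv_pos.2 hβpos))
    have hsum : Summable (fun n => a n p) := by
      apply Summable.of_nonneg_of_le (hanonneg p ⟨hp1, hp2⟩) hbd
      exact (summable_geometric_of_lt_one hr0 hr1).mul_left β⁻¹
    refine ⟨hsum, ?_, hbd⟩
    have h0 : 0 < a 0 p := by
      rw [ha]
      have := hbpos 1 le_rfl
      have : 0 < (p ^ (0+1))⁻¹ := by positivity
      have := hbpos 1 le_rfl
      rw [ha] at *
      positivity
    calc (0:ℝ) < a 0 p := h0
      _ ≤ S p := Summable.le_tsum hsum 0 (fun i _ => hanonneg p ⟨hp1, hp2⟩ i)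
  constructor
  · -- PART 1
    have hmeas : ∀ n : ℕ, Measurable (fun p : ℝ => ENNReal.ofReal (a n p)) := by
      intro n
      rw [ha]
      exact (((measurable_id.pow_const (n+1)).inv).div_const (b (n+1))).ennreal_ofReal
    have step1 : (∫⁻ p in Set.Ioo (1/2:ℝ) 1, ∑' n : ℕ, ENNReal.ofReal (a n p))
        ≤ ∫⁻ p in Set.Ioo (1/2:ℝ) 1, ENNReal.ofReal ((1 + f p) / f p) := by
      apply setLIntegral_mono' measurableSet_Ioo
      intro p hp
      obtain ⟨hsum, hSpos, _⟩ := hfacts p hp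
      have hfp : f p = (S p)⁻¹ := hfS p hp
      have hfp0 : 0 < f p := by rw [hfp]; exact inv_pos.2 hSpos
      have h1 : ∑' n : ℕ, ENNReal.ofReal (a n p) = ENNReal.ofReal (S p) := by
        rw [hS]
        exact (ENNReal.ofReal_tsum_of_nonneg (hanonneg p hp) hsum).symm
      rw [h1]
      apply ENNReal.ofReal_le_ofReal
      have hSfp : (f p)⁻¹ = S p := by rw [hfp, inv_inv]
      rw [div_eq_mul_inv]
      calc S p = (f p)⁻¹ := hSfp.symm
        _ = 1 * (f p)⁻¹ := (one_mul _).symm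
        _ ≤ (1 + f p) * (f p)⁻¹ :=
            mul_le_mul_of_nonneg_right (by linarith) (le_of_lt (inv_pos.2 hfp0))
    have step2 : (∫⁻ p in Set.Ioo (1/2:ℝ) 1, ∑' n : ℕ, ENNReal.ofReal (a n p))
        = ∑' n : ℕ, ∫⁻ p in Set.Ioo (1/2:ℝ) 1, ENNReal.ofReal (a n p) :=
      lintegral_tsum (fun n => (hmeas n).aemeasurable)
    have step3 : ∀ n : ℕ, ENNReal.ofReal ((8*C)⁻¹ * (((n:ℝ)+1) * Real.log ((n:ℝ)+1))⁻¹)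
        ≤ ∫⁻ p in Set.Ioo (1/2:ℝ) 1, ENNReal.ofReal (a n p) := by
      intro n
      rcases Nat.eq_zero_or_pos n with rfl | hn
      · simp
      · have hn1 : (1:ℝ) ≤ (n:ℝ) := by exact_mod_cast hn
        set L : ℝ := Real.log ((n:ℝ)+1) with hL
        have hLpos : 0 < L := Real.log_pos (by linarith)
        set ε : ℝ := (4*((n:ℝ)+1))⁻¹ with hε
        have hεpos : 0 < ε := by positivity
        have hεle : ε ≤ 1/8 := by
          have h8 : (8:ℝ) ≤ 4*((n:ℝ)+1) := by linarith
          calc ε = (4*((n:ℝ)+1))⁻¹ := rfl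
            _ ≤ (8:ℝ)⁻¹ := inv_anti₀ (by norm_num) h8
            _ = 1/8 := by norm_num
        have hsub : Set.Ioo (1/2:ℝ) (1/2+ε) ⊆ Set.Ioo (1/2:ℝ) 1 :=
          Set.Ioo_subset_Ioo le_rfl (by linarith)
        have hlb : ∀ p ∈ Set.Ioo (1/2:ℝ) (1/2+ε),
            ENNReal.ofReal ((2*C*L)⁻¹) ≤ ENNReal.ofReal (a n p) := by
          intro p hp
          apply ENNReal.ofReal_le_ofReal
          obtain ⟨hp1, hp2⟩ := hp
          have hp0 : (0:ℝ) < p := by linarith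
          have hne : ((n:ℝ)+1) ≠ 0 := by positivity
          have hpow : p ^ (n+1) ≤ 2 * ((2:ℝ) ^ (n+1))⁻¹ := by
            have key : (1/2 + ε : ℝ) = (1/2) * (1 + (2*((n:ℝ)+1))⁻¹) := by
              rw [hε]; field_simp; ring
            have h2 : p ^ (n+1) ≤ ((1/2) * (1 + (2*((n:ℝ)+1))⁻¹)) ^ (n+1) := by
              rw [← key]
              exact pow_le_pow_left₀ (le_of_lt hp0) (le_of_lt hp2) (n+1)
            have h3 : (((1:ℝ)/2) * (1 + (2*((n:ℝ)+1))⁻¹)) ^ (n+1)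
                = ((2:ℝ)^(n+1))⁻¹ * (1 + (2*((n:ℝ)+1))⁻¹) ^ (n+1) := by
              rw [mul_pow, one_div, inv_pow]
            have h4 : (1 + (2*((n:ℝ)+1))⁻¹) ^ (n+1) ≤ 2 := by
              have he : 1 + (2*((n:ℝ)+1))⁻¹ ≤ Real.exp ((2*((n:ℝ)+1))⁻¹) := by
                linarith [Real.add_one_le_exp ((2*((n:ℝ)+1))⁻¹)]
              have h5 : (1 + (2*((n:ℝ)+1))⁻¹) ^ (n+1)
                  ≤ Real.exp ((2*((n:ℝ)+1))⁻¹) ^ (n+1) :=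
                pow_le_pow_left₀ (by positivity) he (n+1)
              have h6 : Real.exp ((2*((n:ℝ)+1))⁻¹) ^ (n+1)
                  = Real.exp ((((n+1:ℕ)):ℝ) * (2*((n:ℝ)+1))⁻¹) :=
                (Real.exp_nat_mul _ (n+1)).symm
              have h7 : (((n+1:ℕ)):ℝ) * (2*((n:ℝ)+1))⁻¹ = 1/2 := by
                push_cast
                field_simp
              have h8 : Real.exp (1/2 : ℝ) ≤ 2 := by
                have hl2 := Real.log_two_gt_d9
                calc Real.exp (1/2 : ℝ) ≤ Real.exp (Real.log 2) :=
                      Real.exp_le_exp.2 (by linarith)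
                  _ = 2 := Real.exp_log (by norm_num)
              calc (1 + (2*((n:ℝ)+1))⁻¹) ^ (n+1)
                  ≤ Real.exp ((2*((n:ℝ)+1))⁻¹) ^ (n+1) := h5
                _ = Real.exp ((((n+1:ℕ)):ℝ) * (2*((n:ℝ)+1))⁻¹) := h6
                _ = Real.exp (1/2 : ℝ) := by rw [h7]
                _ ≤ 2 := h8
            calc p ^ (n+1) ≤ ((1/2) * (1 + (2*((n:ℝ)+1))⁻¹)) ^ (n+1) := h2
              _ = ((2:ℝ)^(n+1))⁻¹ * (1 + (2*((n:ℝ)+1))⁻¹) ^ (n+1) := h3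
              _ ≤ ((2:ℝ)^(n+1))⁻¹ * 2 := mul_le_mul_of_nonneg_left h4 (by positivity)
              _ = 2 * ((2:ℝ)^(n+1))⁻¹ := by ring
          have hinv : (2:ℝ)^n ≤ (p ^ (n+1))⁻¹ := by
            have hppos : 0 < p ^ (n+1) := by positivity
            have h9 : (2 * ((2:ℝ)^(n+1))⁻¹)⁻¹ ≤ (p ^ (n+1))⁻¹ :=
              inv_anti₀ hppos hpow
            have h10 : (2 * ((2:ℝ)^(n+1))⁻¹)⁻¹ = (2:ℝ)^n := by
              rw [mul_inv, inv_inv, pow_succ]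
              field_simp
            linarith [h10 ▸ h9]
          have hbub := (hb (n+1) (by omega)).2
          have hcast : Real.log (((n+1:ℕ)):ℝ) = L := by rw [hL]; push_cast; ring_nf
          rw [hcast] at hbub
          have hbpos' := hbpos (n+1) (by omega)
          have e : (2*C*L)⁻¹ = (2:ℝ)^n / (C * 2^(n+1) * L) := by
            rw [pow_succ]
            field_simp
          rw [ha, e]
          exact div_le_div₀ (by positivity) hinv hbpos' hbub
        calc ENNReal.ofReal ((8*C)⁻¹ * (((n:ℝ)+1) * L)⁻¹)
            = ENNReal.ofReal ((2*C*L)⁻¹ * ε) := by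
              congr 1
              rw [hε]
              field_simp
              ring
          _ = ENNReal.ofReal ((2*C*L)⁻¹) * ENNReal.ofReal ε :=
              ENNReal.ofReal_mul (by positivity)
          _ = ENNReal.ofReal ((2*C*L)⁻¹) * volume (Set.Ioo (1/2:ℝ) (1/2+ε)) := by
              rw [Real.volume_Ioo]
              congr 1
              ring_nf
          _ = ∫⁻ _ in Set.Ioo (1/2:ℝ) (1/2+ε), ENNReal.ofReal ((2*C*L)⁻¹) :=
              (setLIntegral_const _ _).symm
          _ ≤ ∫⁻ p in Set.Ioo (1/2:ℝ) (1/2+ε), ENNReal.ofReal (a n p) :=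
              setLIntegral_mono' measurableSet_Ioo hlb
          _ ≤ ∫⁻ p in Set.Ioo (1/2:ℝ) 1, ENNReal.ofReal (a n p) := lintegral_mono_set hsub
    have hdiv : ∑' n : ℕ,
        ENNReal.ofReal ((8*C)⁻¹ * (((n:ℝ)+1) * Real.log ((n:ℝ)+1))⁻¹) = ⊤ := by
      by_contra hcon
      have hsumm : Summable
          (fun n : ℕ => (8*C)⁻¹ * (((n:ℝ)+1) * Real.log ((n:ℝ)+1))⁻¹) := by
        have htr := ENNReal.summable_toReal hcon
        convert htr using 2 with n
        rw [ENNReal.toReal_ofReal]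
        have hlognn : 0 ≤ Real.log ((n:ℝ)+1) :=
          Real.log_nonneg (by linarith [Nat.cast_nonneg (α := ℝ) n])
        positivity
      have := (summable_mul_left_iff
        (show ((8*C)⁻¹:ℝ) ≠ 0 by positivity)).1 hsumm
      exact aux_not_summable this
    have htop : (⊤:ENNReal) ≤ ∫⁻ p in Set.Ioo (1/2:ℝ) 1, ENNReal.ofReal ((1 + f p) / f p) := by
      calc (⊤:ENNReal)
          = ∑' n : ℕ, ENNReal.ofReal ((8*C)⁻¹ * (((n:ℝ)+1) * Real.log ((n:ℝ)+1))⁻¹) :=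
            hdiv.symm
        _ ≤ ∑' n : ℕ, ∫⁻ p in Set.Ioo (1/2:ℝ) 1, ENNReal.ofReal (a n p) :=
            ENNReal.tsum_le_tsum step3
        _ = ∫⁻ p in Set.Ioo (1/2:ℝ) 1, ∑' n : ℕ, ENNReal.ofReal (a n p) := step2.symm
        _ ≤ _ := step1
    exact top_le_iff.1 htop
  · -- PART 2
    have key2 : Tendsto (fun p => f p / (p - 1/2)) (nhdsWithin (1/2:ℝ) (Set.Ioi (1/2))) atTop := by
      rw [tendsto_atTop]
      intro M
      set M' : ℝ := max M 1 with hM'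
      have hM'pos : (0:ℝ) < M' := lt_of_lt_of_le one_pos (le_max_right M 1)
      obtain ⟨N, hNle⟩ : ∃ N : ℕ, Real.exp (2*M'/c) ≤ (N:ℝ) :=
        ⟨⌈Real.exp (2*M'/c)⌉₊, Nat.le_ceil _⟩
      have hLpos : 0 < Real.log ((N:ℝ)+2) :=
        Real.log_pos (by have := Nat.cast_nonneg (α := ℝ) N; linarith)
      have hDle : (c * Real.log ((N:ℝ)+2))⁻¹ ≤ (2*M')⁻¹ := by
        have h1 : Real.exp (2*M'/c) ≤ (N:ℝ) := hNle
        have h3 : 2*M'/c ≤ Real.log ((N:ℝ)+2) := by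
          rw [← Real.log_exp (2*M'/c)]
          exact Real.log_le_log (Real.exp_pos _) (by linarith)
        have h4 : 2*M' ≤ c * Real.log ((N:ℝ)+2) := by
          rw [div_le_iff₀ hc] at h3
          nlinarith
        exact inv_anti₀ (by positivity) h4
      set A : ℝ := ((N:ℝ)+1) * β⁻¹ with hA
      have hA0 : (0:ℝ) ≤ A := by positivity
      set δ : ℝ := min ((2*M')⁻¹ / (A+1)) (1/4) with hδ
      have hδpos : (0:ℝ) < δ := lt_min (by positivity) (by norm_num)
      filter_upwards [Ioo_mem_nhdsGT_of_mem
        (⟨le_refl _, by linarith⟩ : (1/2:ℝ) ∈ Set.Ico (1/2:ℝ) (1/2 + δ))] with p hp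
      obtain ⟨hp1, hp2⟩ := hp
      have hδ4 : δ ≤ 1/4 := min_le_right _ _
      have hpIoo : p ∈ Set.Ioo (1/2:ℝ) 1 := ⟨hp1, by linarith⟩
      have hp0 : (0:ℝ) < p := by linarith
      obtain ⟨hsum, hSpos, hbd⟩ := hfacts p hpIoo
      have hr0 : (0:ℝ) ≤ (2*p)⁻¹ := by positivity
      have hr1 : (2*p)⁻¹ < 1 := inv_lt_one_of_one_lt₀ (by linarith)
      set r : ℝ := (2*p)⁻¹ with hr
      set D : ℝ := (c * Real.log ((N:ℝ)+2))⁻¹ with hD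
      have hD0 : (0:ℝ) ≤ D := by positivity
      have hheadnn : 0 ≤ ∑ n ∈ Finset.range (N+1), a n p :=
        Finset.sum_nonneg (fun n _ => hanonneg p hpIoo n)
      have hhead : ∑ n ∈ Finset.range (N+1), a n p ≤ A := by
        have hβinv : 0 ≤ β⁻¹ := le_of_lt (inv_pos.2 hβpos)
        calc ∑ n ∈ Finset.range (N+1), a n p ≤ ∑ n ∈ Finset.range (N+1), β⁻¹ := by
              apply Finset.sum_le_sum
              intro n _
              refine (hbd n).trans ?_
              have := pow_le_one₀ hr0 hr1.le (n := n)
              nlinarith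
          _ = A := by
              rw [Finset.sum_const, Finset.card_range, hA, nsmul_eq_mul]
              push_cast
              ring
      have htailsum : Summable (fun k => a (k + (N+1)) p) := (summable_nat_add_iff (N+1)).2 hsum
      have htailbd : ∀ k : ℕ, a (k + (N+1)) p ≤ D * r ^ k := by
        intro k
        have hdb : (c * Real.log ((N:ℝ)+2)) * 2 ^ ((k + (N+1))+1) ≤ b ((k + (N+1))+1) := by
          have h2 : 2 ≤ k + (N+1) + 1 := by omega
          have hlow := (hb (k+(N+1)+1) h2).1
          have hcast : Real.log (((k+(N+1)+1 : ℕ)):ℝ) = Real.log ((k:ℝ)+(N:ℝ)+2) := by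
            push_cast; ring_nf
          rw [hcast] at hlow
          have hmono : Real.log ((N:ℝ)+2) ≤ Real.log ((k:ℝ)+(N:ℝ)+2) :=
            Real.log_le_log (by positivity) (by linarith [Nat.cast_nonneg (α := ℝ) k])
          have h2p : (0:ℝ) < 2 ^ ((k + (N+1))+1) := by positivity
          nlinarith [mul_le_mul_of_nonneg_left hmono
            (by positivity : (0:ℝ) ≤ c * 2 ^ ((k + (N+1))+1))]
        refine (hstep p hpIoo (k + (N+1)) (c * Real.log ((N:ℝ)+2)) (by positivity) hdb).trans ?_
        rw [← hD, ← hr]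
        have h1 : r ^ ((k + (N+1))+1) ≤ r ^ k := pow_le_pow_of_le_one hr0 hr1.le (by omega)
        exact mul_le_mul_of_nonneg_left h1 hD0
      have htail : ∑' k, a (k + (N+1)) p ≤ D * (1-r)⁻¹ := by
        calc ∑' k, a (k + (N+1)) p ≤ ∑' k, D * r ^ k :=
              Summable.tsum_le_tsum htailbd htailsum ((summable_geometric_of_lt_one hr0 hr1).mul_left D)
          _ = D * (1-r)⁻¹ := by rw [tsum_mul_left, tsum_geometric_of_lt_one hr0 hr1]
      have htailnn : 0 ≤ ∑' k, a (k + (N+1)) p :=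
        tsum_nonneg (fun k => hanonneg p hpIoo (k + (N+1)))
      have hsplit : S p = ∑ n ∈ Finset.range (N+1), a n p + ∑' k, a (k + (N+1)) p := by
        rw [hS]
        exact (Summable.sum_add_tsum_nat_add (N+1) hsum).symm
      have hpr : (p - 1/2) * (1-r)⁻¹ = p := by
        rw [hr]
        have h2p : (2:ℝ)*p ≠ 0 := by positivity
        have h2p1 : (2:ℝ)*p - 1 ≠ 0 := by
          intro hcon
          have : p = 1/2 := by linarith
          linarith
        field_simp
        have hq : (2*p - 1) * (2*p-1)⁻¹ = 1 := mul_inv_cancel₀ h2p1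
        linear_combination hq
      have hmain : (p - 1/2) * S p ≤ M'⁻¹ := by
        have hδA : δ * A ≤ (2*M')⁻¹ := by
          have hδ1 : δ ≤ (2*M')⁻¹ / (A+1) := min_le_left _ _
          have hA1 : (0:ℝ) < A + 1 := by linarith
          rw [div_eq_mul_inv] at hδ1
          have h2M : (0:ℝ) < (2*M')⁻¹ := by positivity
          have hfrac : (A+1)⁻¹ * A ≤ 1 := by
            rw [inv_mul_le_iff₀ hA1]
            linarith
          calc δ * A ≤ ((2*M')⁻¹ * (A+1)⁻¹) * A := mul_le_mul_of_nonneg_right hδ1 hA0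
            _ = (2*M')⁻¹ * ((A+1)⁻¹ * A) := by ring
            _ ≤ (2*M')⁻¹ * 1 := mul_le_mul_of_nonneg_left hfrac (le_of_lt h2M)
            _ = (2*M')⁻¹ := mul_one _
        have e1 : (p - 1/2) * (∑ n ∈ Finset.range (N+1), a n p) ≤ δ * A := by
          apply mul_le_mul (by linarith) hhead hheadnn (le_of_lt hδpos)
        have e2 : (p - 1/2) * (∑' k, a (k + (N+1)) p) ≤ D := by
          calc (p - 1/2) * (∑' k, a (k + (N+1)) p) ≤ (p - 1/2) * (D * (1-r)⁻¹) :=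
                mul_le_mul_of_nonneg_left htail (by linarith)
            _ = D * ((p - 1/2) * (1-r)⁻¹) := by ring
            _ = D * p := by rw [hpr]
            _ ≤ D * 1 := mul_le_mul_of_nonneg_left (by linarith [hpIoo.2]) hD0
            _ = D := mul_one D
        have hMinv : (2*M')⁻¹ + (2*M')⁻¹ = M'⁻¹ := by
          rw [mul_inv]
          ring
        calc (p - 1/2) * S p
            = (p - 1/2) * (∑ n ∈ Finset.range (N+1), a n p)
              + (p - 1/2) * (∑' k, a (k + (N+1)) p) := by rw [hsplit]; ring
          _ ≤ δ * A + D := add_le_add e1 e2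
          _ ≤ (2*M')⁻¹ + (2*M')⁻¹ := add_le_add hδA hDle
          _ = M'⁻¹ := hMinv
      have hposprod : 0 < (p - 1/2) * S p := mul_pos (by linarith) hSpos
      have hfinal : M' ≤ f p / (p - 1/2) := by
        rw [hfS p hpIoo, div_eq_mul_inv, ← mul_inv, mul_comm (S p) (p - 1/2)]
        calc M' = (M'⁻¹)⁻¹ := (inv_inv M').symm
          _ ≤ ((p - 1/2) * S p)⁻¹ := inv_anti₀ hposprod hmain
      exact le_trans (le_max_left M 1) hfinal
    exact (ENNReal.tendsto_ofReal_atTop.comp key2).limsup_eq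
end

section
/- Let b_n = 2^n·log(n+1) for n ≥ 1 and define g(p) = Σ_{n≥1} p^{-n}/b_n for p ∈ (1/2, 1). Then ∫_{1/2}^1 g(p) dp = ∞. -/
open MeasureTheory Set
open scoped ENNReal

lemma aux_ofReal_tsum_top {a : ℕ → ℝ} (h0 : ∀ n, 0 ≤ a n) (h : ¬ Summable a) :
    ∑' n, ENNReal.ofReal (a n) = ⊤ := by
  by_contra hne
  apply h
  have h1 : Summable (fun n => (a n).toNNReal) := by
    rw [← ENNReal.tsum_coe_ne_top_iff_summable]
    exact hne
  have h2 := NNReal.summable_coe.mpr h1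
  simpa [Real.coe_toNNReal _ (h0 _)] using h2

lemma aux_harm : ¬ Summable (fun k : ℕ => 1 / (4 * Real.log 2 * ((k : ℝ) + 2))) := by
  intro h
  have hl : (0:ℝ) < Real.log 2 := Real.log_pos (by norm_num)
  have h2 : Summable (fun k : ℕ => 1 / ((k : ℝ) + 2)) := by
    have := h.mul_left (4 * Real.log 2)
    refine this.congr fun k => ?_
    field_simp
  have h3 : Summable (fun k : ℕ => 1 / ((k + 2 : ℕ) : ℝ)) := by
    refine h2.congr fun k => ?_
    push_cast; ring
  exact Real.not_summable_one_div_natCast ((summable_nat_add_iff 2).mp h3)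

noncomputable def auxf (m : ℕ) : ENNReal := ENNReal.ofReal (1 / (4 * m * Real.log (m + 2)))

lemma aux_cond : ∑' k : ℕ, 2 ^ k * auxf (2 ^ k) = ⊤ := by
  rw [eq_top_iff]
  have key : ∀ k : ℕ, ENNReal.ofReal (1 / (4 * Real.log 2 * ((k : ℝ) + 2))) ≤ 2 ^ k * auxf (2 ^ k) := by
    intro k
    have hl : (0:ℝ) < Real.log 2 := Real.log_pos (by norm_num)
    have h2 : (2:ℝ≥0∞) ^ k = ENNReal.ofReal ((2:ℝ) ^ k) := by
      simp [ENNReal.ofReal_pow]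
    rw [auxf, h2, ← ENNReal.ofReal_mul (by positivity)]
    apply ENNReal.ofReal_le_ofReal
    have hp : (0:ℝ) < 2 ^ k := by positivity
    have hlog : Real.log ((2:ℝ) ^ k + 2) ≤ (k + 2) * Real.log 2 := by
      have hle : (2:ℝ) ^ k + 2 ≤ 2 ^ (k + 2) := by
        have h1 : (1:ℝ) ≤ 2 ^ k := one_le_pow₀ (by norm_num)
        rw [pow_add]
        nlinarith
      calc Real.log ((2:ℝ) ^ k + 2) ≤ Real.log ((2:ℝ) ^ (k + 2)) :=
            Real.log_le_log (by positivity) hle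
        _ = (k + 2) * Real.log 2 := by
            rw [Real.log_pow]; push_cast; ring
    have hlogpos : (0:ℝ) < Real.log ((2:ℝ) ^ k + 2) := Real.log_pos (by nlinarith [pow_pos (show (0:ℝ)<2 by norm_num) k])
    push_cast
    rw [mul_one_div, div_le_div_iff₀ (by positivity) (by positivity)]
    nlinarith [mul_le_mul_of_nonneg_left hlog (by positivity : (0:ℝ) ≤ 4 * 2^k)]
  calc (⊤:ℝ≥0∞) = ∑' k : ℕ, ENNReal.ofReal (1 / (4 * Real.log 2 * ((k : ℝ) + 2))) := by
        rw [aux_ofReal_tsum_top (fun k => by positivity) aux_harm]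
    _ ≤ _ := ENNReal.tsum_le_tsum key

lemma aux_tsum_auxf : ∑' m : ℕ, auxf m = ⊤ := by
  by_contra hne
  have hf : ∀ ⦃m n : ℕ⦄, 1 < m → m ≤ n → auxf n ≤ auxf m := by
    intro m n hm hmn
    apply ENNReal.ofReal_le_ofReal
    have hm' : (0:ℝ) < m := by exact_mod_cast Nat.zero_lt_of_lt hm
    have hmn' : (m:ℝ) ≤ n := by exact_mod_cast hmn
    have hlm : (0:ℝ) < Real.log (m + 2) := Real.log_pos (by linarith)
    apply one_div_le_one_div_of_le (by positivity)
    have : Real.log ((m:ℝ) + 2) ≤ Real.log ((n:ℝ) + 2) :=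
      Real.log_le_log (by linarith) (by linarith)
    gcongr
  have := ENNReal.tsum_condensed_le hf
  rw [aux_cond] at this
  have h1 : auxf 1 ≠ ⊤ := ENNReal.ofReal_ne_top
  exact absurd this (by simp [ENNReal.add_eq_top, ENNReal.mul_eq_top, h1, hne, top_le_iff])

lemma aux_tsum_shift : ∑' n : ℕ, ENNReal.ofReal (1 / (4 * ((n:ℝ) + 1) * Real.log ((n:ℝ) + 3))) = ⊤ := by
  have h2 : ∑' n : ℕ, auxf (n + 1) = ⊤ :=
    ENNReal.tsum_add_one_eq_top aux_tsum_auxf ENNReal.ofReal_ne_top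
  rw [← h2]
  congr 1
  funext n
  rw [auxf]
  push_cast
  ring_nf

lemma aux_int (n : ℕ) :
    ENNReal.ofReal (1 / (4 * ((n:ℝ) + 1) * Real.log ((n:ℝ) + 3))) ≤
    ∫⁻ p in Set.Ioo (1 / 2 : ℝ) 1,
      ENNReal.ofReal (p ^ (-((n:ℤ) + 2)) / (2 ^ (n + 2) * Real.log ((n:ℝ) + 3))) := by
  have hL : (0:ℝ) < Real.log ((n:ℝ) + 3) := Real.log_pos (by push_cast; linarith [Nat.cast_nonneg (α := ℝ) n])
  set c : ℝ := 2 ^ (n + 2) * Real.log ((n:ℝ) + 3) with hc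
  have hcpos : 0 < c := by positivity
  set f : ℝ → ℝ := fun p => p ^ (-((n:ℤ) + 2)) / c with hf
  have hcont : ContinuousOn f (Set.Icc (1/2 : ℝ) 1) := by
    apply ContinuousOn.div_const
    exact continuousOn_id.zpow₀ _ (fun x hx => Or.inl (by have := hx.1; norm_num at this ⊢; linarith))
  have hint : IntegrableOn f (Set.Ioo (1/2 : ℝ) 1) :=
    (hcont.integrableOn_Icc).mono_set Set.Ioo_subset_Icc_self
  have hae : 0 ≤ᵐ[volume.restrict (Set.Ioo (1/2 : ℝ) 1)] f := by
    filter_upwards [ae_restrict_mem measurableSet_Ioo] with p hp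
    have hp0 : (0:ℝ) < p := lt_trans (by norm_num) hp.1
    have := zpow_pos hp0 (-((n:ℤ) + 2))
    positivity
  rw [← MeasureTheory.ofReal_integral_eq_lintegral_ofReal hint hae]
  apply ENNReal.ofReal_le_ofReal
  have hval : ∫ p in Set.Ioo (1/2 : ℝ) 1, f p = ((2:ℝ) ^ (n+1) - 1) / (n + 1) / c := by
    rw [← MeasureTheory.integral_Ioc_eq_integral_Ioo,
        ← intervalIntegral.integral_of_le (by norm_num : (1/2:ℝ) ≤ 1)]
    rw [hf]
    simp only [intervalIntegral.integral_div]
    rw [integral_zpow (Or.inr ⟨by omega, by rw [Set.uIcc_of_le (by norm_num : (1/2:ℝ) ≤ 1)]; norm_num⟩)]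
    congr 1
    have h1 : (1:ℝ) ^ (-((n:ℤ) + 2) + 1) = 1 := one_zpow _
    have h2 : ((1:ℝ)/2) ^ (-((n:ℤ) + 2) + 1) = 2 ^ (n+1) := by
      rw [show -((n:ℤ) + 2) + 1 = -((n:ℤ) + 1) by ring, one_div, inv_zpow, ← zpow_neg, neg_neg,
        show ((n:ℤ) + 1) = ((n+1 : ℕ) : ℤ) by push_cast; ring, zpow_natCast]
    rw [h1, h2]
    push_cast
    rw [show (-((n:ℝ) + 2) + 1) = -((n:ℝ)+1) by ring]
    rw [div_neg]; ring
  rw [hval, hc, div_div, div_le_div_iff₀ (by positivity) (by positivity)]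
  have h1 : (1:ℝ) ≤ 2 ^ n := one_le_pow₀ (by norm_num)
  have hn0 : (0:ℝ) ≤ n := Nat.cast_nonneg n
  have e1 : (2:ℝ) ^ (n + 1) = 2 * 2 ^ n := by ring
  have e2 : (2:ℝ) ^ (n + 2) = 4 * 2 ^ n := by ring
  rw [e1, e2]
  nlinarith [mul_nonneg (mul_nonneg (by linarith : (0:ℝ) ≤ 4 * ((n:ℝ)+1)) hL.le)
    (by linarith : (0:ℝ) ≤ (2:ℝ)^n - 1)]

/-- With `b_n = 2^n log(n+1)` and `g(p) = ∑_{n≥1} p^{-n}/b_n`, one has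
`∫_{1/2}^1 g(p) dp = ∞`. -/
theorem stmt_12 :
    (∫⁻ p in Set.Ioo (1 / 2 : ℝ) 1,
      ∑' n : ℕ, ENNReal.ofReal
        (p ^ (-(n + 1 : ℤ)) / (2 ^ (n + 1) * Real.log (n + 2)))) = ⊤ := by
  have hmeas : ∀ n : ℕ, Measurable (fun p : ℝ =>
      ENNReal.ofReal (p ^ (-((n : ℤ) + 1)) / (2 ^ (n + 1) * Real.log ((n:ℝ) + 2)))) := by
    intro n
    apply ENNReal.measurable_ofReal.comp
    apply Measurable.div_const
    simp_rw [zpow_neg, show ((n:ℤ) + 1) = ((n + 1 : ℕ) : ℤ) by push_cast; ring, zpow_natCast]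
    exact (measurable_id.pow_const (n + 1)).inv
  rw [lintegral_tsum (fun n => (hmeas n).aemeasurable)]
  rw [eq_top_iff]
  calc (⊤:ℝ≥0∞)
      = ∑' n : ℕ, ENNReal.ofReal (1 / (4 * ((n:ℝ) + 1) * Real.log ((n:ℝ) + 3))) :=
        aux_tsum_shift.symm
    _ ≤ ∑' n : ℕ, ∫⁻ p in Set.Ioo (1 / 2 : ℝ) 1,
          ENNReal.ofReal (p ^ (-(((n+1 : ℕ)) + 1 : ℤ)) / (2 ^ ((n+1) + 1) * Real.log (((n+1:ℕ):ℝ) + 2))) := by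
        apply ENNReal.tsum_le_tsum
        intro n
        have h := aux_int n
        convert h using 4 with p
        push_cast; ring
    _ ≤ _ := ENNReal.tsum_comp_le_tsum_of_injective (f := fun n : ℕ => n + 1)
        (add_left_injective 1)
        (fun i : ℕ => ∫⁻ p in Set.Ioo (1 / 2 : ℝ) 1,
          ENNReal.ofReal (p ^ (-((i:ℤ) + 1)) / (2 ^ (i + 1) * Real.log ((i:ℝ) + 2))))
end

section
/- Let b_n = 2^n·log(n+1) and g(p) = Σ_{n≥1} p^{-n}/b_n for p ∈ (1/2,1). Then lim_{p↓1/2} (p - 1/2)·g(p) = 0; equivalently, with f(p) = 1/g(p), limsup_{p↓1/2} f(p)/(p - 1/2) = ∞. -/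
open Filter

/-- With `b_n = 2^n log(n+1)` and `g(p) = ∑_{n≥1} p^{-n}/b_n`, one has
`lim_{p↓1/2} (p - 1/2) g(p) = 0`. -/
theorem stmt_13 :
    Filter.Tendsto
      (fun p : ℝ => (p - 1 / 2) *
        ∑' n : ℕ, p ^ (-(n + 1 : ℤ)) / (2 ^ (n + 1) * Real.log (n + 2)))
      (nhdsWithin (1 / 2 : ℝ) (Set.Ioi (1 / 2))) (nhds 0) := by
  rw [NormedAddCommGroup.tendsto_nhds_zero]
  intro ε hε
  set N : ℕ := ⌈Real.exp (4 / ε)⌉₊ with hNdef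
  have hlogN : 4 / ε ≤ Real.log ((N : ℝ) + 2) := by
    have h1 : Real.exp (4 / ε) ≤ (N : ℝ) + 2 := by
      have := Nat.le_ceil (Real.exp (4 / ε))
      linarith
    calc (4:ℝ)/ε = Real.log (Real.exp (4/ε)) := (Real.log_exp _).symm
      _ ≤ Real.log ((N:ℝ) + 2) := Real.log_le_log (Real.exp_pos _) h1
  have hlog2 : (0:ℝ) < Real.log 2 := Real.log_pos (by norm_num)
  have hδpos : 0 < ε / (2 * ((N : ℝ) / Real.log 2 + 1)) := by positivity
  set δ := ε / (2 * ((N : ℝ) / Real.log 2 + 1)) with hδdef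
  have hmem : Set.Ioo (1/2 : ℝ) (min 1 (1/2 + δ)) ∈ nhdsWithin (1/2 : ℝ) (Set.Ioi (1/2)) := by
    apply Ioo_mem_nhdsGT_of_mem
    constructor
    · exact le_refl _
    · rw [lt_min_iff]; constructor <;> linarith
  filter_upwards [hmem] with p hp
  obtain ⟨hp1, hp2⟩ := hp
  have hpl1 : p < 1 := lt_of_lt_of_le hp2 (min_le_left _ _)
  have hpδ : p < 1/2 + δ := lt_of_lt_of_le hp2 (min_le_right _ _)
  have hp0 : (0:ℝ) < p := by linarith
  set q := 1 / (2 * p) with hqdef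
  have hq0 : 0 < q := by positivity
  have hq1 : q < 1 := by
    rw [hqdef, div_lt_one (by linarith)]; linarith
  set F := fun n : ℕ => q ^ (n+1) / Real.log ((n:ℝ) + 2) with hFdef
  have hLpos : ∀ n : ℕ, 0 < Real.log ((n:ℝ) + 2) := by
    intro n
    apply Real.log_pos
    have : (0:ℝ) ≤ (n:ℝ) := Nat.cast_nonneg n
    linarith
  have hterm : ∀ n : ℕ, p ^ (-(n + 1 : ℤ)) / (2 ^ (n + 1) * Real.log ((n:ℝ) + 2)) = F n := by
    intro n
    have h1 : p ^ (-(n + 1 : ℤ)) = (p ^ (n+1))⁻¹ := by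
      rw [show (-(n + 1 : ℤ)) = -((n+1 : ℕ) : ℤ) by push_cast; ring, zpow_neg, zpow_natCast]
    rw [h1, hFdef]
    have hL := (hLpos n).ne'
    have hpne : p ^ (n+1) ≠ 0 := by positivity
    simp only [hqdef]
    rw [div_pow, one_pow, mul_pow]
    field_simp
  have hFnonneg : ∀ n, 0 ≤ F n := by
    intro n
    have := hLpos n
    rw [hFdef]
    positivity
  have hgeo : Summable (fun n : ℕ => q ^ (n+1)) := by
    simpa [pow_succ'] using (summable_geometric_of_lt_one hq0.le hq1).mul_left q
  have hsum : Summable F := by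
    apply Summable.of_nonneg_of_le hFnonneg _ (hgeo.div_const (Real.log 2))
    intro n
    have hL : Real.log 2 ≤ Real.log ((n:ℝ)+2) := by
      apply Real.log_le_log (by norm_num)
      have : (0:ℝ) ≤ (n:ℝ) := Nat.cast_nonneg n
      linarith
    show q ^ (n+1) / Real.log ((n:ℝ)+2) ≤ q ^ (n+1) / Real.log 2
    gcongr
  -- rewrite tsum
  have hts : (∑' n : ℕ, p ^ (-(n + 1 : ℤ)) / (2 ^ (n + 1) * Real.log ((n:ℝ) + 2))) = ∑' n, F n :=
    tsum_congr hterm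
  have htsum_nonneg : 0 ≤ ∑' n, F n := tsum_nonneg hFnonneg
  -- split the sum
  have hsplit := Summable.sum_add_tsum_nat_add N hsum
  -- head bound
  have hhead : ∑ i ∈ Finset.range N, F i ≤ (N:ℝ) / Real.log 2 := by
    have hb : ∀ i ∈ Finset.range N, F i ≤ 1 / Real.log 2 := by
      intro i _
      show q ^ (i+1) / Real.log ((i:ℝ)+2) ≤ 1 / Real.log 2
      have h1 : q ^ (i+1) ≤ 1 := pow_le_one₀ hq0.le hq1.le
      have hL : Real.log 2 ≤ Real.log ((i:ℝ)+2) := by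
        apply Real.log_le_log (by norm_num)
        have : (0:ℝ) ≤ (i:ℝ) := Nat.cast_nonneg i
        linarith
      gcongr
    calc ∑ i ∈ Finset.range N, F i ≤ ∑ _i ∈ Finset.range N, 1 / Real.log 2 :=
          Finset.sum_le_sum hb
      _ = (N:ℝ) / Real.log 2 := by
          rw [Finset.sum_const, Finset.card_range, nsmul_eq_mul]
          ring
  -- tail bound
  have htail : (∑' i : ℕ, F (i + N)) ≤ (ε/4) * (1 - q)⁻¹ := by
    have hgeo2 : Summable (fun i : ℕ => (ε/4) * q ^ i) :=
      (summable_geometric_of_lt_one hq0.le hq1).mul_left _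
    have hb : ∀ i : ℕ, F (i + N) ≤ (ε/4) * q ^ i := by
      intro i
      show q ^ (i + N + 1) / Real.log (((i + N : ℕ):ℝ) + 2) ≤ (ε/4) * q ^ i
      have hcast : ((i + N : ℕ):ℝ) = (i:ℝ) + (N:ℝ) := by push_cast; ring
      rw [hcast]
      have hL1 : Real.log ((N:ℝ)+2) ≤ Real.log ((i:ℝ)+(N:ℝ)+2) := by
        apply Real.log_le_log (by positivity)
        have : (0:ℝ) ≤ (i:ℝ) := Nat.cast_nonneg i
        linarith
      have hLpos2 : 0 < Real.log ((i:ℝ)+(N:ℝ)+2) :=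
        lt_of_lt_of_le (lt_of_lt_of_le (by positivity) hlogN) hL1
      have h1 : 1 / Real.log ((i:ℝ)+(N:ℝ)+2) ≤ ε/4 := by
        rw [div_le_div_iff₀ hLpos2 (by norm_num : (0:ℝ) < 4)]
        have h4 : 4 ≤ Real.log ((N:ℝ)+2) * ε := by
          rw [div_le_iff₀ hε] at hlogN
          linarith
        nlinarith
      have h2 : q ^ (i + N + 1) ≤ q ^ i :=
        pow_le_pow_of_le_one hq0.le hq1.le (by omega)
      calc q ^ (i+N+1) / Real.log ((i:ℝ)+(N:ℝ)+2)
          = q ^ (i+N+1) * (1 / Real.log ((i:ℝ)+(N:ℝ)+2)) := by ring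
        _ ≤ q ^ i * (ε/4) := by
            apply mul_le_mul h2 h1 (by positivity) (pow_nonneg hq0.le _)
        _ = (ε/4) * q ^ i := by ring
    calc (∑' i : ℕ, F (i + N)) ≤ ∑' i : ℕ, (ε/4) * q ^ i :=
          Summable.tsum_le_tsum hb ((summable_nat_add_iff N).mpr hsum) hgeo2
      _ = (ε/4) * (1 - q)⁻¹ := by
          rw [tsum_mul_left, tsum_geometric_of_lt_one hq0.le hq1]
  -- combine
  have h1mq : 1 - q = (p - 1/2) / p := by
    rw [hqdef]
    field_simp
  have h1mqpos : 0 < 1 - q := by linarith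
  have hkey : (p - 1/2) * (1 - q)⁻¹ = p := by
    have hne : p - 1/2 ≠ 0 := ne_of_gt (by linarith)
    rw [h1mq, inv_div, mul_comm]
    exact div_mul_cancel₀ p hne
  have hT : (∑' n, F n) ≤ (N:ℝ) / Real.log 2 + (ε/4) * (1 - q)⁻¹ := by
    rw [← hsplit]
    exact add_le_add hhead htail
  have hpos : 0 < p - 1/2 := by linarith
  simp only [hts]
  rw [Real.norm_eq_abs, abs_of_nonneg (mul_nonneg hpos.le htsum_nonneg)]
  have hstep : (p - 1/2) * (∑' n, F n)
      ≤ (p - 1/2) * ((N:ℝ) / Real.log 2 + (ε/4) * (1 - q)⁻¹) :=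
    mul_le_mul_of_nonneg_left hT hpos.le
  have hexp : (p - 1/2) * ((N:ℝ) / Real.log 2 + (ε/4) * (1 - q)⁻¹)
      = (p - 1/2) * ((N:ℝ) / Real.log 2) + (ε/4) * p := by
    rw [mul_add]
    congr 1
    rw [show (p - 1/2) * ((ε/4) * (1 - q)⁻¹) = (ε/4) * ((p - 1/2) * (1 - q)⁻¹) by ring, hkey]
  have hC : (0:ℝ) ≤ (N:ℝ) / Real.log 2 := by positivity
  have hδε : δ * (2 * ((N:ℝ) / Real.log 2 + 1)) = ε := by
    rw [hδdef]
    field_simp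
  have hfin : (p - 1/2) * ((N:ℝ) / Real.log 2) + (ε/4) * p < ε := by
    nlinarith [mul_le_mul_of_nonneg_right (le_of_lt (by linarith : p - 1/2 < δ)) hC]
  linarith [hstep, hexp ▸ hstep]
end
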